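/- Let d, n ≥ 1, let 𝕋^d be the product of d copies of the additive circle ℝ/2πℤ (a compact abelian group), and let f : 𝕋^d → ℝ^n be continuous with ∫_{𝕋^d} f dμ = 0, where μ is the Haar measure on 𝕋^d. For θ ∈ 𝕋^d define the translate f_θ : 𝕋^d → ℝ^n by f_θ(x) = f(x + θ). Then, in the Banach space C(𝕋^d, ℝ^n) of continuous maps with the supremum norm, the closure of the convex cone generated by {f_θ : θ ∈ 𝕋^d} (i.e. of the set of all finite sums Σ αᵢ f_{θᵢ} with αᵢ ≥ 0) equals the closure of the linear span of {f_θ : θ ∈ 𝕋^d}. -/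

import Mathlib

/-!
Hahn–Banach: if the closed cone generated by the translates `f_θ` missed a point of their span,
some continuous functional `Λ` would be nonnegative on every `f_θ` without vanishing on all of
them. But `θ ↦ Λ f_θ` is continuous and integrates to `Λ (∫ f_θ dθ) = 0`, because by invariance
of Haar measure `∫ f_θ dθ` is the constant function `∫ f dμ = 0`; a continuous nonnegative
function with zero integral against a measure charging every open set vanishes identically.
-/

open Set Real MeasureTheory ContinuousMap

noncomputable section

instance : Fact (0 < 2 * Real.pi) := ⟨by positivity⟩

/-- The `d`-dimensional torus `𝕋^d = (ℝ/2πℤ)^d`. -/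
abbrev Torus (d : ℕ) := Fin d → AddCircle (2 * Real.pi)

/-- Translation by `θ` as a continuous self-map of the torus. -/
def translation (d : ℕ) (θ : Torus d) : C(Torus d, Torus d) :=
  ⟨fun x => x + θ, by continuity⟩

theorem PointedCone.mem_hull_range_iff {ι E : Type*} [AddCommMonoid E] [Module ℝ E] {v : ι → E}
    {x : E} : x ∈ PointedCone.hull ℝ (range v) ↔
      ∃ (N : ℕ) (α : Fin N → ℝ) (θ : Fin N → ι), (∀ i, 0 ≤ α i) ∧ x = ∑ i, α i • v (θ i) := by
  rw [Submodule.mem_span_set']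
  constructor
  · rintro ⟨N, c, g, rfl⟩
    choose θ hθ using fun i => (g i).2
    exact ⟨N, fun i => c i, θ, fun i => (c i).2, by simp [hθ]⟩
  · rintro ⟨N, α, θ, hα, rfl⟩
    exact ⟨N, fun i => ⟨α i, hα i⟩, fun i => ⟨v (θ i), mem_range_self _⟩, rfl⟩

theorem closure_hull_eq_closure_span {E : Type*} [TopologicalSpace E] [AddCommGroup E]
    [IsTopologicalAddGroup E] [Module ℝ E] [ContinuousSMul ℝ E] [LocallyConvexSpace ℝ E]
    {s : Set E} (h : ∀ Λ : StrongDual ℝ E, (∀ x ∈ s, 0 ≤ Λ x) → ∀ x ∈ s, Λ x = 0) :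
    closure (PointedCone.hull ℝ s : Set E) = closure (Submodule.span ℝ s : Set E) := by
  refine (closure_mono (PointedCone.hull_le_span ℝ s)).antisymm
    (closure_minimal (fun x hx => ?_) isClosed_closure)
  by_contra hxC
  obtain ⟨Λ, hΛC, hΛx⟩ :=
    ProperCone.hyperplane_separation_point (Submodule.closure (PointedCone.hull ℝ s)) hxC
  have hΛs : EqOn Λ 0 s :=
    h Λ fun y hy => hΛC y (subset_closure (PointedCone.subset_hull (R := ℝ) hy))
  exact hΛx.ne (LinearMap.eqOn_span (f := Λ.toLinearMap) (g := 0) hΛs hx)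

theorem Continuous.eq_zero_of_nonneg_of_integral_eq_zero {X : Type*} [TopologicalSpace X]
    [CompactSpace X] [MeasurableSpace X] [OpensMeasurableSpace X] {μ : Measure X}
    [IsFiniteMeasure μ] [μ.IsOpenPosMeasure] {g : X → ℝ} (hg : Continuous g) (hg0 : 0 ≤ g)
    (hint : ∫ x, g x ∂μ = 0) (x : X) : g x = 0 := by
  by_contra hx
  exact (hg.integral_pos_of_hasCompactSupport_nonneg_nonzero (μ := μ) (.of_compactSpace _) hg0
    hx).ne' hint

theorem closure_hull_range_eq_closure_span_range_of_integral_eq_zero {X E : Type*}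
    [TopologicalSpace X] [CompactSpace X] [MeasurableSpace X] [OpensMeasurableSpace X]
    (μ : Measure X) [IsFiniteMeasure μ] [μ.IsOpenPosMeasure]
    [NormedAddCommGroup E] [NormedSpace ℝ E] [CompleteSpace E] {Φ : X → E}
    (hΦ : Continuous Φ) (hint : ∫ x, Φ x ∂μ = 0) :
    closure (PointedCone.hull ℝ (range Φ) : Set E) =
      closure (Submodule.span ℝ (range Φ) : Set E) := by
  refine closure_hull_eq_closure_span fun Λ hΛ => ?_
  rintro _ ⟨x, rfl⟩
  refine (Λ.continuous.comp hΦ).eq_zero_of_nonneg_of_integral_eq_zero (μ := μ)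
    (fun y => hΛ _ (mem_range_self y)) ?_ x
  rw [Function.comp_def, Λ.integral_comp_comm
    (hΦ.integrable_of_hasCompactSupport (.of_compactSpace _)), hint, map_zero]

namespace ContinuousMap

theorem continuous_comp_addRight {G E : Type*} [TopologicalSpace G] [LocallyCompactSpace G]
    [AddGroup G] [IsTopologicalAddGroup G] [TopologicalSpace E] (f : C(G, E)) :
    Continuous fun θ : G => f.comp (ContinuousMap.addRight θ) :=
  continuous_of_continuous_uncurry _ <| f.continuous.comp (continuous_snd.add continuous_fst)

theorem integral_comp_addRight {G E : Type*} [TopologicalSpace G] [CompactSpace G]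
    [AddGroup G] [IsTopologicalAddGroup G] [MeasurableSpace G] [BorelSpace G]
    (μ : Measure G) [IsFiniteMeasure μ] [μ.IsAddLeftInvariant]
    [NormedAddCommGroup E] [NormedSpace ℝ E] [CompleteSpace E] (f : C(G, E)) :
    ∫ θ, f.comp (ContinuousMap.addRight θ) ∂μ = const G (∫ x, f x ∂μ) := by
  ext x
  rw [integral_apply (f.continuous_comp_addRight.integrable_of_hasCompactSupport
    (.of_compactSpace _))]
  exact integral_add_left_eq_self (fun θ => f θ) x

end ContinuousMap

theorem stmt_2_general (d n : ℕ)
    (f : C(Torus d, EuclideanSpace ℝ (Fin n)))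
    (hf : ∫ x : Torus d, f x = 0) :
    closure {g : C(Torus d, EuclideanSpace ℝ (Fin n)) |
        ∃ (N : ℕ) (α : Fin N → ℝ) (θ : Fin N → Torus d),
          (∀ i, 0 ≤ α i) ∧ g = ∑ i, α i • f.comp (translation d (θ i))} =
    closure (Submodule.span ℝ
        {g : C(Torus d, EuclideanSpace ℝ (Fin n)) |
          ∃ θ : Torus d, g = f.comp (translation d θ)} :
      Set C(Torus d, EuclideanSpace ℝ (Fin n))) := by
  have hcone : {g : C(Torus d, EuclideanSpace ℝ (Fin n)) |
      ∃ (N : ℕ) (α : Fin N → ℝ) (θ : Fin N → Torus d),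
        (∀ i, 0 ≤ α i) ∧ g = ∑ i, α i • f.comp (translation d (θ i))} =
      PointedCone.hull ℝ (range fun θ => f.comp (ContinuousMap.addRight θ)) := by
    ext g
    exact (PointedCone.mem_hull_range_iff
      (v := fun θ => f.comp (ContinuousMap.addRight θ))).symm
  have htranslates : {g : C(Torus d, EuclideanSpace ℝ (Fin n)) |
      ∃ θ : Torus d, g = f.comp (translation d θ)} =
      range fun θ => f.comp (ContinuousMap.addRight θ) := by
    ext g
    exact exists_congr fun θ => eq_comm
  rw [hcone, htranslates]
  refine closure_hull_range_eq_closure_span_range_of_integral_eq_zero volume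
    f.continuous_comp_addRight ?_
  rw [f.integral_comp_addRight volume, hf]
  rfl

/-- For a continuous `f : 𝕋^d → ℝ^n` with zero mean, the closure (in the sup norm)
of the convex cone generated by the translates `f_θ` equals the closure of their
linear span. -/
theorem stmt_2 (d n : ℕ) (hd : 1 ≤ d) (hn : 1 ≤ n)
    (f : C(Torus d, EuclideanSpace ℝ (Fin n)))
    (hf : ∫ x : Torus d, f x = 0) :
    closure {g : C(Torus d, EuclideanSpace ℝ (Fin n)) |
        ∃ (N : ℕ) (α : Fin N → ℝ) (θ : Fin N → Torus d),
          (∀ i, 0 ≤ α i) ∧ g = ∑ i, α i • f.comp (translation d (θ i))} =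
    closure (Submodule.span ℝ
        {g : C(Torus d, EuclideanSpace ℝ (Fin n)) |
          ∃ θ : Torus d, g = f.comp (translation d θ)} :
      Set C(Torus d, EuclideanSpace ℝ (Fin n))) :=
  stmt_2_general d n f hf
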